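/- arXiv:1206.3029 — 2 statements merged into one kernel-verified Lean document; each statement's English description precedes it below -/
import Mathlib

section
/- The Mellin transform of the Rician channel power density f(x) = θ^{-1}(K+1) e^{-(K + (K+1)x/θ)} I₀(√(4K(K+1)x/θ)) evaluated at s+1 equals e^{-K} (θ/(K+1))^s Γ(s+1) · ₁F₁(s+1, 1; K), for Re(s) > −1. -/
open MeasureTheory Set

/-- The Mellin transform of a real-valued function on `[0,∞)`. -/
noncomputable def mellinT (f : ℝ → ℝ) (s : ℂ) : ℂ :=
  ∫ x in Ioi (0 : ℝ), (x : ℂ) ^ (s - 1) * (f x : ℂ)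

/-- The modified Bessel function of the first kind of order zero,
`I₀(y) = ∑ₖ (y/2)^{2k} / (k!)²`. -/
noncomputable def besselI0 (y : ℝ) : ℝ :=
  ∑' k : ℕ, (y / 2) ^ (2 * k) / ((k.factorial : ℝ)) ^ 2

/-- Kummer's confluent hypergeometric function `₁F₁(a, b; z)`. -/
noncomputable def kummer1F1 (a b z : ℂ) : ℂ :=
  ∑' k : ℕ, (∏ i ∈ Finset.range k, (a + i)) / (∏ i ∈ Finset.range k, (b + i))
    * z ^ k / (k.factorial : ℂ)

open scoped Nat

/-!
Expanding `I₀` as a power series, the density is `l e^{-K} e^{-lx} ∑ₖ (K l x)ᵏ / (k!)²` with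
`l = (K+1)/θ`. Each term contributes a Gamma integral `∫ x^{s+k} e^{-lx} dx = Γ(s+k+1) / l^{s+k+1}`,
and termwise integration is justified because `∑ₖ Kᵏ Γ(σ+k+1) / (k!)²` converges by the ratio
test. Finally `Γ(s+1+k) = Γ(s+1) (s+1)ₖ` and `(1)ₖ = k!` turn the resulting series into
`Γ(s+1) ₁F₁(s+1, 1; K)`.
-/

theorem besselI0_sqrt {y : ℝ} (hy : 0 ≤ y) :
    besselI0 (√y) = ∑' k : ℕ, (y / 4) ^ k / (k ! : ℝ) ^ 2 := by
  refine tsum_congr fun k => ?_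
  rw [pow_mul, div_pow, Real.sq_sqrt hy]
  norm_num

theorem Complex.Gamma_add_nat_eq_mul_prod {z : ℂ} (hz : ∀ m : ℕ, z ≠ -m) (k : ℕ) :
    Complex.Gamma (z + k) = Complex.Gamma z * ∏ i ∈ Finset.range k, (z + i) := by
  induction k with
  | zero => simp
  | succ k ih =>
    have hzk : z + k ≠ 0 := fun h => hz k (eq_neg_of_add_eq_zero_left h)
    rw [Nat.cast_succ, ← add_assoc, Complex.Gamma_add_one _ hzk, ih, Finset.prod_range_succ]
    ring

theorem Complex.ne_neg_natCast_of_re_pos {z : ℂ} (hz : 0 < z.re) (m : ℕ) : z ≠ -m := fun h => by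
  have := congrArg Complex.re h
  simp only [Complex.neg_re, Complex.natCast_re] at this
  linarith [(m.cast_nonneg : (0 : ℝ) ≤ m)]

theorem Gamma_mul_kummer1F1_one {a : ℂ} (ha : ∀ m : ℕ, a ≠ -m) (z : ℂ) :
    Complex.Gamma a * kummer1F1 a 1 z
      = ∑' k : ℕ, Complex.Gamma (a + k) * z ^ k / (k ! : ℂ) ^ 2 := by
  rw [kummer1F1, ← tsum_mul_left]
  refine tsum_congr fun k => ?_
  have hfact : ∏ i ∈ Finset.range k, ((1 : ℂ) + i) = k ! := by
    have h1 : ∀ m : ℕ, (1 : ℂ) ≠ -m := Complex.ne_neg_natCast_of_re_pos (by simp)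
    simpa [Complex.Gamma_nat_eq_factorial, add_comm] using
      (Complex.Gamma_add_nat_eq_mul_prod h1 k).symm
  rw [Complex.Gamma_add_nat_eq_mul_prod ha, hfact]
  have : (k ! : ℂ) ≠ 0 := Nat.cast_ne_zero.mpr k.factorial_ne_zero
  field_simp

theorem summable_pow_div_factorial_sq_mul_Gamma {c σ : ℝ} (hc : 0 ≤ c) (hσ : 0 < σ) :
    Summable fun k : ℕ => c ^ k / (k ! : ℝ) ^ 2 * Real.Gamma (σ + k) := by
  set B := fun k : ℕ => c ^ k / (k ! : ℝ) ^ 2 * Real.Gamma (σ + k)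
  set ρ := fun k : ℕ => c * (σ + k) / ((k : ℝ) + 1) ^ 2
  have hrec : ∀ k, B (k + 1) = ρ k * B k := by
    intro k
    have hσk : σ + k ≠ 0 := (add_pos_of_pos_of_nonneg hσ k.cast_nonneg).ne'
    simp only [B, ρ, Nat.factorial_succ, Nat.cast_mul, Nat.cast_succ, ← add_assoc,
      Real.Gamma_add_one hσk]
    have : (k ! : ℝ) ≠ 0 := by positivity
    field_simp
    ring
  have hρ : Filter.Tendsto ρ Filter.atTop (nhds 0) := by
    have hu := tendsto_one_div_add_atTop_nhds_zero_nat (𝕜 := ℝ)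
    have := ((hu.pow 2).const_mul (σ - 1) |>.add hu).const_mul c
    simp only [ne_eq, OfNat.ofNat_ne_zero, not_false_eq_true, zero_pow, mul_zero, add_zero] at this
    refine this.congr fun k => ?_
    simp only [ρ]
    field_simp
    ring
  refine summable_of_ratio_norm_eventually_le (r := 1 / 2) (by norm_num) ?_
  filter_upwards [hρ.eventually_lt_const (by norm_num : (0 : ℝ) < 1 / 2)] with k hk
  have hρ0 : 0 ≤ ρ k := by have := hσ.le; positivity
  rw [hrec, norm_mul, Real.norm_of_nonneg hρ0]
  exact mul_le_mul_of_nonneg_right hk.le (norm_nonneg _)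

theorem mellinT_congr {f g : ℝ → ℝ} (hfg : EqOn f g (Ioi 0)) (s : ℂ) :
    mellinT f s = mellinT g s :=
  setIntegral_congr_fun measurableSet_Ioi fun x hx => by rw [hfg hx]

theorem mellinT_exp_neg_mul_tsum {a : ℕ → ℝ} {l : ℝ} (hl : 0 < l) {s : ℂ} (hs : 0 < s.re)
    (hsum : Summable fun k : ℕ => |a k| / l ^ k * Real.Gamma (s.re + k)) :
    mellinT (fun x => Real.exp (-(l * x)) * ∑' k : ℕ, a k * x ^ k) s
      = ∑' k : ℕ, (a k : ℂ) * ((1 / l : ℂ) ^ (s + k) * Complex.Gamma (s + k)) := by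
  set F : ℕ → ℝ → ℂ := fun k x => a k * ((x : ℂ) ^ (s + k - 1) * Complex.exp (-(l * x)))
  have hre : ∀ k : ℕ, 0 < (s + k).re := fun k => by
    simpa using add_pos_of_pos_of_nonneg hs k.cast_nonneg
  have hexpand : EqOn (fun x : ℝ => (x : ℂ) ^ (s - 1) *
      ((Real.exp (-(l * x)) * ∑' k : ℕ, a k * x ^ k : ℝ) : ℂ)) (fun x => ∑' k, F k x) (Ioi 0) := by
    intro x hx
    have hx0 : (x : ℂ) ≠ 0 := Complex.ofReal_ne_zero.mpr (ne_of_gt hx)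
    simp only [F, Complex.ofReal_mul, Complex.ofReal_tsum, ← tsum_mul_left]
    refine tsum_congr fun k => ?_
    rw [add_sub_right_comm, Complex.cpow_add _ _ hx0, Complex.cpow_natCast]
    push_cast
    ring
  have hnorm : ∀ k, ∀ x ∈ Ioi (0 : ℝ),
      ‖F k x‖ = |a k| * (x ^ ((s + k).re - 1) * Real.exp (-(l * x))) := by
    intro k x hx
    simp only [F, norm_mul, Complex.norm_real, Real.norm_eq_abs, Complex.norm_exp,
      Complex.norm_cpow_eq_rpow_re_of_pos hx]
    simp
  have hnormInt : ∀ k : ℕ,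
      ∫ x in Ioi 0, ‖F k x‖ = (1 / l) ^ s.re * (|a k| / l ^ k * Real.Gamma (s.re + k)) := by
    intro k
    rw [setIntegral_congr_fun measurableSet_Ioi (hnorm k), integral_const_mul,
      Real.integral_rpow_mul_exp_neg_mul_Ioi (hre k) hl]
    have hσk : (s + k).re = s.re + k := by simp
    rw [hσk, Real.rpow_add (by positivity), Real.rpow_natCast, one_div_pow]
    field_simp
  have hInt : ∀ k : ℕ, Integrable (F k) (volume.restrict (Ioi 0)) := by
    intro k
    have hbound :
        IntegrableOn (fun x : ℝ => x ^ ((s + k).re - 1) * Real.exp (-(l * x))) (Ioi 0) := by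
      simpa using integrableOn_rpow_mul_exp_neg_mul_rpow (by linarith [hre k]) zero_lt_one hl
    refine Integrable.mono' (hbound.const_mul |a k|) ?_
      ((ae_restrict_mem measurableSet_Ioi).mono fun x hx => (hnorm k x hx).le)
    refine (continuousOn_const.mul (ContinuousOn.mul ?_ (by fun_prop))).aestronglyMeasurable
      measurableSet_Ioi
    exact (Complex.continuous_ofReal.continuousOn).cpow_const
      fun x hx => Complex.ofReal_mem_slitPlane.mpr hx
  rw [mellinT, setIntegral_congr_fun measurableSet_Ioi hexpand,
    ← integral_tsum_of_summable_integral_norm hInt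
      ((hsum.mul_left _).congr fun k => (hnormInt k).symm)]
  refine tsum_congr fun k => ?_
  rw [integral_const_mul, Complex.integral_cpow_mul_exp_neg_mul_Ioi (hre k) hl]

noncomputable def ricianCoeff (K l : ℝ) (k : ℕ) : ℝ :=
  l * Real.exp (-K) * ((K * l) ^ k / (k ! : ℝ) ^ 2)

theorem rician_density_eq_exp_mul_tsum {K θ x : ℝ} (hK : 0 ≤ K) (hθ : 0 < θ) (hx : 0 ≤ x) :
    θ⁻¹ * (K + 1) * Real.exp (-(K + (K + 1) * x / θ)) * besselI0 (√(4 * K * (K + 1) * x / θ))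
      = Real.exp (-((K + 1) / θ * x)) * ∑' k : ℕ, ricianCoeff K ((K + 1) / θ) k * x ^ k := by
  have hexp : Real.exp (-(K + (K + 1) * x / θ))
      = Real.exp (-K) * Real.exp (-((K + 1) / θ * x)) := by
    rw [← Real.exp_add]
    ring_nf
  have hquarter : 4 * K * (K + 1) * x / θ / 4 = K * ((K + 1) / θ) * x := by ring
  simp only [besselI0_sqrt (by positivity : 0 ≤ 4 * K * (K + 1) * x / θ), hexp, hquarter,
    ricianCoeff, ← tsum_mul_left]
  refine tsum_congr fun k => ?_
  rw [mul_pow]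
  ring

theorem summable_abs_ricianCoeff_div_pow_mul_Gamma {K l σ : ℝ} (hK : 0 ≤ K) (hl : 0 < l)
    (hσ : 0 < σ) :
    Summable fun k : ℕ => |ricianCoeff K l k| / l ^ k * Real.Gamma (σ + k) := by
  refine ((summable_pow_div_factorial_sq_mul_Gamma hK hσ).mul_left (l * Real.exp (-K))).congr
    fun k => ?_
  rw [abs_of_nonneg (by unfold ricianCoeff; positivity)]
  simp only [ricianCoeff, mul_pow]
  field_simp

theorem ricianCoeff_mul_one_div_cpow {K l : ℝ} (hl : l ≠ 0) (s : ℂ) (k : ℕ) :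
    (ricianCoeff K l k : ℂ) * (1 / l : ℂ) ^ (s + 1 + k)
      = Real.exp (-K) * (1 / l : ℂ) ^ s * (K ^ k / (k ! : ℂ) ^ 2) := by
  have hl0 : (l : ℂ) ≠ 0 := Complex.ofReal_ne_zero.mpr hl
  rw [Complex.cpow_add _ _ (one_div_ne_zero hl0), Complex.cpow_add _ _ (one_div_ne_zero hl0),
    Complex.cpow_one, Complex.cpow_natCast, ricianCoeff]
  push_cast
  rw [mul_pow, one_div, inv_pow]
  field_simp

/-- Mellin transform of the Rician channel power density:
`M[f; s+1] = e^{-K} (θ/(K+1))^s Γ(s+1) ₁F₁(s+1, 1; K)` for `Re s > -1`. -/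
theorem mellin_rician_density (K θ : ℝ) (hK : 0 ≤ K) (hθ : 0 < θ) (s : ℂ)
    (hs : -1 < s.re) :
    mellinT (fun x => θ⁻¹ * (K + 1) * Real.exp (-(K + (K + 1) * x / θ))
        * besselI0 (Real.sqrt (4 * K * (K + 1) * x / θ))) (s + 1)
      = Real.exp (-K) * ((θ / (K + 1) : ℝ) : ℂ) ^ s * Complex.Gamma (s + 1)
        * kummer1F1 (s + 1) 1 (K : ℂ) := by
  have hl : 0 < (K + 1) / θ := by positivity
  have hre : 0 < (s + 1).re := by
    rw [Complex.add_re, Complex.one_re]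
    linarith
  have hθl : ((θ / (K + 1) : ℝ) : ℂ) = 1 / ((K + 1) / θ : ℝ) := by
    rw [← one_div_div, Complex.ofReal_div, Complex.ofReal_one]
  rw [mellinT_congr (fun x hx => rician_density_eq_exp_mul_tsum hK hθ (le_of_lt hx)),
    mellinT_exp_neg_mul_tsum hl hre (summable_abs_ricianCoeff_div_pow_mul_Gamma hK hl hre), hθl,
    mul_assoc _ (Complex.Gamma _), Gamma_mul_kummer1F1_one (Complex.ne_neg_natCast_of_re_pos hre),
    ← tsum_mul_left]
  refine tsum_congr fun k => ?_
  rw [← mul_assoc, ricianCoeff_mul_one_div_cpow hl.ne']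
  ring
end

section
/- The Mellin transform of the Hoyt channel power density f(x) = ((1+q²)/(2qθ)) e^{-(1+q²)² x/(4q²θ)} I₀((1−q⁴)x/(4q²θ)) evaluated at s+1 equals (2q/(1+q²))^{2s+1} θ^s Γ(s+1) · ₂F₁((s+1)/2, (s+2)/2; 1; ((1−q²)/(1+q²))²), for Re(s) > −1. -/
/-! Expanding `I₀` in its power series turns the Mellin integrand into a series of Gamma
integrals `∫₀^∞ x^(a+2k-1) e^(-Ax) dx = A^(-(a+2k)) Γ(a+2k)`. For `|B| < A` the series of the
absolute integrals converges by the ratio test (the ratio tends to `4 (B/2A)² < 1`), so sum and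
integral may be exchanged. The duplication identity `Γ(a+2k) = 4^k Γ(a) (a/2)_k ((a+1)/2)_k` then
turns the series into `A^(-a) Γ(a) ₂F₁(a/2, (a+1)/2; 1; (B/A)²)`. For the Hoyt density
`A = (1+q²)²/(4q²θ)` and `B = (1-q⁴)/(4q²θ)`, so that `B/A = (1-q²)/(1+q²)` and
`1/A = (2q/(1+q²))² θ`. -/

open MeasureTheory Set

/-- The Gauss hypergeometric function `₂F₁(a, b; c; z)`. -/
noncomputable def gauss2F1 (a b c z : ℂ) : ℂ :=
  ∑' k : ℕ, (∏ i ∈ Finset.range k, (a + i)) * (∏ i ∈ Finset.range k, (b + i))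
    / (∏ i ∈ Finset.range k, (c + i)) * z ^ k / (k.factorial : ℂ)

open Filter Topology

namespace Complex

theorem Gamma_add_two_mul_nat {z : ℂ} (hz : 0 < z.re) (k : ℕ) :
    Gamma (z + 2 * k) = 4 ^ k * Gamma z * (∏ i ∈ Finset.range k, (z / 2 + i))
      * ∏ i ∈ Finset.range k, ((z + 1) / 2 + i) := by
  induction k with
  | zero => simp
  | succ k ih =>
    have h₀ : z + 2 * k ≠ 0 := ne_zero_of_re_pos (by simp; positivity)
    have h₁ : z + 2 * k + 1 ≠ 0 := ne_zero_of_re_pos (by simp; positivity)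
    rw [show z + 2 * ((k + 1 : ℕ) : ℂ) = z + 2 * k + 1 + 1 by push_cast; ring,
      Gamma_add_one _ h₁, Gamma_add_one _ h₀, ih, Finset.prod_range_succ, Finset.prod_range_succ]
    ring

variable {a : ℂ} {r : ℝ}

theorem norm_cpow_mul_exp_neg_mul {x : ℝ} (hx : 0 < x) :
    ‖(x : ℂ) ^ (a - 1) * exp (-(r * x))‖ = x ^ (a.re - 1) * Real.exp (-(r * x)) := by
  rw [norm_mul, norm_cpow_eq_rpow_re_of_pos hx, ← ofReal_mul, ← ofReal_neg, norm_exp_ofReal]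
  simp

theorem integrableOn_cpow_mul_exp_neg_mul_Ioi (ha : 0 < a.re) (hr : 0 < r) :
    IntegrableOn (fun x : ℝ => (x : ℂ) ^ (a - 1) * exp (-(r * x))) (Ioi 0) := by
  refine Integrable.mono' (g := fun x => x ^ (a.re - 1) * Real.exp (-(r * x))) ?_ ?_ ?_
  · have := integrableOn_rpow_mul_exp_neg_mul_rpow (p := 1) (s := a.re - 1) (by linarith) one_pos hr
    simpa [IntegrableOn] using this
  · refine ContinuousOn.aestronglyMeasurable (fun x hx => ?_) measurableSet_Ioi
    exact ((continuousAt_ofReal_cpow_const x _ (Or.inr (ne_of_gt hx))).mul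
      (by fun_prop)).continuousWithinAt
  · exact (ae_restrict_iff' measurableSet_Ioi).mpr
      (Eventually.of_forall fun x hx => (norm_cpow_mul_exp_neg_mul hx).le)

theorem integral_norm_cpow_mul_exp_neg_mul_Ioi (ha : 0 < a.re) (hr : 0 < r) :
    ∫ x : ℝ in Ioi 0, ‖(x : ℂ) ^ (a - 1) * exp (-(r * x))‖ = (1 / r) ^ a.re * Real.Gamma a.re := by
  rw [setIntegral_congr_fun measurableSet_Ioi fun x hx => norm_cpow_mul_exp_neg_mul hx,
    Real.integral_rpow_mul_exp_neg_mul_Ioi ha hr]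

end Complex

theorem prod_range_one_add_natCast_eq_factorial (k : ℕ) :
    ∏ i ∈ Finset.range k, ((1 : ℂ) + i) = k.factorial := by
  rw [← Finset.prod_range_add_one_eq_factorial]
  push_cast
  exact Finset.prod_congr rfl fun i _ => add_comm _ _

namespace Real

theorem summable_Gamma_add_two_mul_mul_pow_div_factorial_sq {σ r : ℝ} (hσ : 0 < σ)
    (hr₀ : 0 ≤ r) (hr : r < 1 / 4) :
    Summable fun k : ℕ => Gamma (σ + 2 * k) * r ^ k / (k.factorial : ℝ) ^ 2 := by
  rcases hr₀.eq_or_lt with rfl | hr₀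
  · refine summable_of_ne_finset_zero (s := {0}) fun k hk => ?_
    simp [zero_pow (by simpa using hk : k ≠ 0)]
  set f : ℕ → ℝ := fun k => Gamma (σ + 2 * k) * r ^ k / (k.factorial : ℝ) ^ 2
  have hf : ∀ k, 0 < f k := fun k => by
    have : 0 < Gamma (σ + 2 * k) := Gamma_pos_of_pos (by positivity)
    positivity
  have ratio : ∀ k : ℕ, ‖f (k + 1)‖ / ‖f k‖
      = (2 + (σ - 2) / (k + 1)) * (2 + (σ - 1) / (k + 1)) * r := by
    intro k
    have hΓ : Gamma (σ + 2 * ((k + 1 : ℕ) : ℝ))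
        = (σ + 2 * k + 1) * (σ + 2 * k) * Gamma (σ + 2 * k) := by
      rw [show σ + 2 * ((k + 1 : ℕ) : ℝ) = σ + 2 * k + 1 + 1 by push_cast; ring,
        Gamma_add_one (by positivity), Gamma_add_one (by positivity), mul_assoc]
    have : 0 < Gamma (σ + 2 * k) := Gamma_pos_of_pos (by positivity)
    rw [norm_of_nonneg (hf _).le, norm_of_nonneg (hf _).le]
    simp only [f, hΓ, Nat.factorial_succ]
    push_cast
    field_simp
    ring
  have h_lim : Tendsto (fun k : ℕ => ‖f (k + 1)‖ / ‖f k‖) atTop (𝓝 (4 * r)) := by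
    have h_inv : ∀ c : ℝ, Tendsto (fun k : ℕ => c / ((k : ℝ) + 1)) atTop (𝓝 0) := fun c => by
      simpa [Function.comp_def] using
        (tendsto_const_div_atTop_nhds_zero_nat c).comp (tendsto_add_atTop_nat 1)
    rw [show 4 * r = (2 + 0) * (2 + 0) * r by ring, funext ratio]
    exact (((h_inv _).const_add 2).mul ((h_inv _).const_add 2)).mul_const r
  exact summable_of_ratio_test_tendsto_lt_one (by linarith)
    (Eventually.of_forall fun k => (hf k).ne') h_lim

end Real

theorem cpow_mul_exp_neg_mul_besselI0_eq_tsum {x : ℝ} (hx : 0 < x) (a : ℂ) (A B : ℝ) :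
    (x : ℂ) ^ (a - 1) * ((Real.exp (-(A * x)) * besselI0 (B * x) : ℝ) : ℂ)
      = ∑' k : ℕ, (((B / 2) ^ (2 * k) / (k.factorial : ℝ) ^ 2 : ℝ) : ℂ)
          * ((x : ℂ) ^ (a + 2 * k - 1) * Complex.exp (-(A * x))) := by
  rw [besselI0, ← tsum_mul_left, Complex.ofReal_tsum, ← tsum_mul_left]
  refine tsum_congr fun k => ?_
  rw [show a + 2 * k - 1 = a - 1 + ((2 * k : ℕ) : ℂ) by push_cast; ring,
    Complex.cpow_add _ _ (Complex.ofReal_ne_zero.mpr hx.ne'), Complex.cpow_natCast]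
  push_cast
  ring

theorem summable_besselI0_coeff_mul_Gamma {A B σ : ℝ} (hBA : |B| < A) (hσ : 0 < σ) :
    Summable fun k : ℕ => (B / 2) ^ (2 * k) / (k.factorial : ℝ) ^ 2
      * ((1 / A) ^ (σ + 2 * k) * Real.Gamma (σ + 2 * k)) := by
  have hA : 0 < A := (abs_nonneg B).trans_lt hBA
  have hr : (B / (2 * A)) ^ 2 < 1 / 4 := by
    rw [div_pow, div_lt_iff₀ (by positivity)]
    nlinarith [sq_lt_sq.mpr (hBA.trans_eq (abs_of_pos hA).symm)]
  refine ((Real.summable_Gamma_add_two_mul_mul_pow_div_factorial_sq hσ (sq_nonneg _) hr).mul_left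
    ((1 / A) ^ σ)).congr fun k => ?_
  rw [Real.rpow_add (by positivity), show 2 * (k : ℝ) = ((2 * k : ℕ) : ℝ) by push_cast; ring,
    Real.rpow_natCast, ← pow_mul, mul_comm 2 k, pow_mul, pow_mul, pow_mul]
  field_simp
  ring

theorem integral_cpow_mul_exp_neg_mul_besselI0 {A B : ℝ} (hBA : |B| < A) {a : ℂ} (ha : 0 < a.re) :
    ∫ x in Ioi (0 : ℝ), (x : ℂ) ^ (a - 1) * ((Real.exp (-(A * x)) * besselI0 (B * x) : ℝ) : ℂ)
      = ∑' k : ℕ, (((B / 2) ^ (2 * k) / (k.factorial : ℝ) ^ 2 : ℝ) : ℂ)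
          * ((1 / A : ℂ) ^ (a + 2 * k) * Complex.Gamma (a + 2 * k)) := by
  have hA : 0 < A := (abs_nonneg B).trans_lt hBA
  set c : ℕ → ℝ := fun k => (B / 2) ^ (2 * k) / (k.factorial : ℝ) ^ 2
  have hc : ∀ k, 0 ≤ c k := fun k => by
    simp only [c, pow_mul]
    positivity
  have hre : ∀ k : ℕ, (a + 2 * k).re = a.re + 2 * k := fun k => by simp
  have hre_pos : ∀ k : ℕ, 0 < (a + 2 * k).re := fun k => by rw [hre]; positivity
  set F : ℕ → ℝ → ℂ := fun k x => (c k : ℂ) * ((x : ℂ) ^ (a + 2 * k - 1) * Complex.exp (-(A * x)))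
  have hF_int : ∀ k, Integrable (F k) (volume.restrict (Ioi 0)) := fun k =>
    (Complex.integrableOn_cpow_mul_exp_neg_mul_Ioi (hre_pos k) hA).const_mul _
  have hF_norm : ∀ k, ∫ x in Ioi (0 : ℝ), ‖F k x‖
      = c k * ((1 / A) ^ (a.re + 2 * k) * Real.Gamma (a.re + 2 * k)) := fun k => by
    simp only [F, norm_mul (c k : ℂ), Complex.norm_real, Real.norm_of_nonneg (hc k),
      integral_const_mul]
    rw [Complex.integral_norm_cpow_mul_exp_neg_mul_Ioi (hre_pos k) hA, hre]
  have hF_sum : Summable fun k => ∫ x in Ioi (0 : ℝ), ‖F k x‖ := by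
    simpa only [hF_norm] using summable_besselI0_coeff_mul_Gamma hBA ha
  rw [setIntegral_congr_fun measurableSet_Ioi fun x hx =>
      cpow_mul_exp_neg_mul_besselI0_eq_tsum hx a A B,
    ← integral_tsum_of_summable_integral_norm hF_int hF_sum]
  refine tsum_congr fun k => ?_
  rw [integral_const_mul, Complex.integral_cpow_mul_exp_neg_mul_Ioi (hre_pos k) hA]

theorem besselI0_coeff_mul_Gamma_eq {a : ℂ} (ha : 0 < a.re) {A : ℝ} (hA : A ≠ 0) (B : ℝ) (k : ℕ) :
    (((B / 2) ^ (2 * k) / (k.factorial : ℝ) ^ 2 : ℝ) : ℂ)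
        * ((1 / A : ℂ) ^ (a + 2 * k) * Complex.Gamma (a + 2 * k))
      = (1 / A : ℂ) ^ a * Complex.Gamma a
        * ((∏ i ∈ Finset.range k, (a / 2 + i)) * (∏ i ∈ Finset.range k, ((a + 1) / 2 + i))
          / (∏ i ∈ Finset.range k, ((1 : ℂ) + i)) * (((B / A : ℝ) : ℂ) ^ 2) ^ k
          / (k.factorial : ℂ)) := by
  have hA' : (A : ℂ) ≠ 0 := Complex.ofReal_ne_zero.mpr hA
  rw [Complex.Gamma_add_two_mul_nat ha, prod_range_one_add_natCast_eq_factorial,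
    show a + 2 * (k : ℂ) = a + ((2 * k : ℕ) : ℂ) by push_cast; ring,
    Complex.cpow_add _ _ (one_div_ne_zero hA'), Complex.cpow_natCast]
  rw [show ((B / 2) ^ (2 * k) : ℝ) = B ^ (2 * k) / 4 ^ k by
    rw [div_pow, pow_mul, pow_mul]; norm_num]
  push_cast
  field_simp
  ring

theorem mellinT_exp_neg_mul_mul_besselI0 {A B : ℝ} (hBA : |B| < A) {a : ℂ} (ha : 0 < a.re) :
    mellinT (fun x => Real.exp (-(A * x)) * besselI0 (B * x)) a
      = (1 / A : ℂ) ^ a * Complex.Gamma a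
        * gauss2F1 (a / 2) ((a + 1) / 2) 1 (((B / A : ℝ) : ℂ) ^ 2) := by
  have hA : A ≠ 0 := ((abs_nonneg B).trans_lt hBA).ne'
  rw [mellinT, integral_cpow_mul_exp_neg_mul_besselI0 hBA ha, gauss2F1, ← tsum_mul_left]
  exact tsum_congr (besselI0_coeff_mul_Gamma_eq ha hA B)

theorem mellinT_const_mul (c : ℝ) (f : ℝ → ℝ) (s : ℂ) :
    mellinT (fun x => c * f x) s = c * mellinT f s := by
  simp only [mellinT, Complex.ofReal_mul, ← integral_const_mul, mul_left_comm]

theorem inv_mul_cpow_sq_mul_add_one {u θ : ℝ} (hu : 0 < u) (hθ : 0 < θ) (s : ℂ) :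
    (((u * θ)⁻¹ : ℝ) : ℂ) * ((u ^ 2 * θ : ℝ) : ℂ) ^ (s + 1)
      = (u : ℂ) ^ (2 * s + 1) * (θ : ℂ) ^ s := by
  have hu' : (u : ℂ) ≠ 0 := Complex.ofReal_ne_zero.mpr hu.ne'
  have hθ' : (θ : ℂ) ≠ 0 := Complex.ofReal_ne_zero.mpr hθ.ne'
  rw [sq, Complex.ofReal_mul (u * u), Complex.mul_cpow_ofReal_nonneg (by positivity) hθ.le,
    Complex.ofReal_mul u u, Complex.mul_cpow_ofReal_nonneg hu.le hu.le,
    show 2 * s + 1 = s + s + 1 by ring]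
  simp only [Complex.cpow_add _ _ hu', Complex.cpow_add _ _ hθ', Complex.cpow_one]
  push_cast
  field_simp

theorem mellin_hoyt_density_general (q θ : ℝ) (hq0 : 0 < q) (hθ : 0 < θ) (s : ℂ)
    (hs : -1 < s.re) :
    mellinT (fun x => (1 + q ^ 2) / (2 * q * θ)
        * Real.exp (-(1 + q ^ 2) ^ 2 * x / (4 * q ^ 2 * θ))
        * besselI0 ((1 - q ^ 4) * x / (4 * q ^ 2 * θ))) (s + 1)
      = ((2 * q / (1 + q ^ 2) : ℝ) : ℂ) ^ (2 * s + 1) * (θ : ℂ) ^ s * Complex.Gamma (s + 1)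
        * gauss2F1 ((s + 1) / 2) ((s + 2) / 2) 1
            (((1 - q ^ 2) / (1 + q ^ 2) : ℝ) ^ 2 : ℂ) := by
  have hBA : |(1 - q ^ 4) / (4 * q ^ 2 * θ)| < (1 + q ^ 2) ^ 2 / (4 * q ^ 2 * θ) := by
    rw [abs_div, abs_of_pos (by positivity : 0 < 4 * q ^ 2 * θ),
      div_lt_div_iff_of_pos_right (by positivity), abs_lt]
    constructor <;> nlinarith [pow_pos hq0 2, pow_pos hq0 4]
  have hf : (fun x => (1 + q ^ 2) / (2 * q * θ) * Real.exp (-(1 + q ^ 2) ^ 2 * x / (4 * q ^ 2 * θ))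
        * besselI0 ((1 - q ^ 4) * x / (4 * q ^ 2 * θ)))
      = fun x => (1 + q ^ 2) / (2 * q * θ) * (Real.exp (-((1 + q ^ 2) ^ 2 / (4 * q ^ 2 * θ) * x))
        * besselI0 ((1 - q ^ 4) / (4 * q ^ 2 * θ) * x)) := by
    funext x
    ring_nf
  rw [hf, mellinT_const_mul, mellinT_exp_neg_mul_mul_besselI0 hBA (by simp; linarith)]
  have hw : (1 - q ^ 4) / (4 * q ^ 2 * θ) / ((1 + q ^ 2) ^ 2 / (4 * q ^ 2 * θ))
      = (1 - q ^ 2) / (1 + q ^ 2) := by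
    field_simp
    ring
  have hC : (1 + q ^ 2) / (2 * q * θ) = (2 * q / (1 + q ^ 2) * θ)⁻¹ := by
    field_simp
  have hA : (1 / (((1 + q ^ 2) ^ 2 / (4 * q ^ 2 * θ) : ℝ) : ℂ))
      = (((2 * q / (1 + q ^ 2)) ^ 2 * θ : ℝ) : ℂ) := by
    push_cast
    field_simp
    ring
  rw [hw, hA, hC, show s + 1 + 1 = s + 2 by ring, ← mul_assoc, ← mul_assoc,
    inv_mul_cpow_sq_mul_add_one (by positivity) hθ]

/-- Mellin transform of the Hoyt channel power density:
`M[f; s+1] = (2q/(1+q²))^{2s+1} θ^s Γ(s+1) ₂F₁((s+1)/2, (s+2)/2; 1; ((1-q²)/(1+q²))²)`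
for `Re s > -1`. -/
theorem mellin_hoyt_density (q θ : ℝ) (hq0 : 0 < q) (hq1 : q ≤ 1) (hθ : 0 < θ) (s : ℂ)
    (hs : -1 < s.re) :
    mellinT (fun x => (1 + q ^ 2) / (2 * q * θ)
        * Real.exp (-(1 + q ^ 2) ^ 2 * x / (4 * q ^ 2 * θ))
        * besselI0 ((1 - q ^ 4) * x / (4 * q ^ 2 * θ))) (s + 1)
      = ((2 * q / (1 + q ^ 2) : ℝ) : ℂ) ^ (2 * s + 1) * (θ : ℂ) ^ s * Complex.Gamma (s + 1)
        * gauss2F1 ((s + 1) / 2) ((s + 2) / 2) 1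
            (((1 - q ^ 2) / (1 + q ^ 2) : ℝ) ^ 2 : ℂ) :=
  mellin_hoyt_density_general q θ hq0 hθ s hs
end
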